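/- arXiv:1602.01269 — 2 statements merged into one kernel-verified Lean document; each statement's English description precedes it below -/
import Mathlib

section
/- Let (S, d) be a separable metric space. For any two Borel probability measures μ₁, μ₂ on S, the Prokhorov distance satisfies d^{(P)}(μ₁, μ₂) ≤ ((3/2) d^{(FM)}(μ₁, μ₂))^{1/2}, where d^{(FM)} is the Fortet–Mourier (bounded-Lipschitz) distance. -/
/-!
Let `β` be the Fortet–Mourier distance and `ε > √((3/2) β)`, so `β < (2/3) ε²`; for `ε ≥ 1` the
Prokhorov condition is trivial. For a Borel set `B`, the thickened indicator `g` of `B` at scale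
`ε` takes values in `[0, 1]`, equals `1` on `B`, vanishes off the `ε`-thickening `Bᵉ` and is
`ε⁻¹`-Lipschitz, so `g - 1/2` is an admissible test function after dividing by `1/2 + ε⁻¹`.
Hence `μ₁ B - μ₂ Bᵉ ≤ ∫ g dμ₁ - ∫ g dμ₂ ≤ (1/2 + ε⁻¹) β ≤ ε²/3 + 2ε/3 ≤ ε`.
-/

open MeasureTheory

/-- The Prokhorov distance built from a distance function `d` on a space `X`. -/
noncomputable def prokhorovOf {X : Type*} [MeasurableSpace X] (d : X → X → ℝ)
    (P Q : Measure X) : ℝ :=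
  sInf {ε : ℝ | 0 < ε ∧ ∀ B : Set X, MeasurableSet B →
    P B ≤ Q {x | ∃ y ∈ B, d x y < ε} + ENNReal.ofReal ε}

/-- The Fortet–Mourier (bounded-Lipschitz) distance:
`sup {|∫ h dμ₁ − ∫ h dμ₂| : ‖h‖_∞ + ‖h‖_Lip ≤ 1}`. -/
noncomputable def fortetMourier {S : Type*} [MetricSpace S] [MeasurableSpace S]
    (μ₁ μ₂ : Measure S) : ℝ :=
  sSup {c : ℝ | ∃ (h : S → ℝ) (A L : ℝ), 0 ≤ A ∧ 0 ≤ L ∧ A + L ≤ 1 ∧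
    (∀ x, |h x| ≤ A) ∧ LipschitzWith (Real.toNNReal L) h ∧
    c = |(∫ x, h x ∂μ₁) - ∫ x, h x ∂μ₂|}

theorem prokhorovOf_le_of_forall_lt {X : Type*} [MeasurableSpace X] {d : X → X → ℝ}
    {P Q : Measure X} {t : ℝ} (ht : 0 ≤ t)
    (h : ∀ ε > t, ∀ B : Set X, MeasurableSet B →
      P B ≤ Q {x | ∃ y ∈ B, d x y < ε} + ENNReal.ofReal ε) :
    prokhorovOf d P Q ≤ t :=
  le_of_forall_gt_imp_ge_of_dense fun ε hε =>
    csInf_le ⟨0, fun _ hδ => hδ.1.le⟩ ⟨ht.trans_lt hε, h ε hε⟩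

section ThickenedIndicator

variable {X : Type*} [PseudoEMetricSpace X] [MeasurableSpace X] [OpensMeasurableSpace X]
  (μ : Measure X) [IsFiniteMeasure μ] {δ : ℝ} {B : Set X}

theorem measureReal_le_integral_thickenedIndicator (hδ : 0 < δ) (hB : MeasurableSet B) :
    μ.real B ≤ ∫ x, (thickenedIndicator hδ B x : ℝ) ∂μ := by
  rw [← integral_indicator_one hB]
  refine integral_mono ((integrable_const 1).indicator hB)
    (BoundedContinuousFunction.integrable_of_nnreal μ _) fun x => ?_
  by_cases hx : x ∈ B
  · simp [hx, thickenedIndicator_one hδ B hx]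
  · simp [hx]

theorem integral_thickenedIndicator_le_measureReal_thickening (hδ : 0 < δ) :
    ∫ x, (thickenedIndicator hδ B x : ℝ) ∂μ ≤ μ.real (Metric.thickening δ B) := by
  rw [← integral_indicator_one Metric.isOpen_thickening.measurableSet]
  refine integral_mono (BoundedContinuousFunction.integrable_of_nnreal μ _)
    ((integrable_const 1).indicator Metric.isOpen_thickening.measurableSet) fun x => ?_
  by_cases hx : x ∈ Metric.thickening δ B
  · simpa [hx] using thickenedIndicator_le_one hδ B x
  · simp [hx, thickenedIndicator_zero hδ B hx]

end ThickenedIndicator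

section FortetMourier

variable {S : Type*} [MetricSpace S] [MeasurableSpace S]
  {μ₁ μ₂ : Measure S} [IsProbabilityMeasure μ₁] [IsProbabilityMeasure μ₂]

theorem abs_integral_sub_integral_le_fortetMourier {h : S → ℝ} {A L : ℝ} (hA : 0 ≤ A)
    (hL : 0 ≤ L) (hAL : A + L ≤ 1) (hbound : ∀ x, |h x| ≤ A)
    (hlip : LipschitzWith (Real.toNNReal L) h) :
    |(∫ x, h x ∂μ₁) - ∫ x, h x ∂μ₂| ≤ fortetMourier μ₁ μ₂ := by
  refine le_csSup ⟨2, ?_⟩ ⟨h, A, L, hA, hL, hAL, hbound, hlip, rfl⟩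
  rintro _ ⟨f, a, l, -, hl, hal, hfa, -, rfl⟩
  have hint : ∀ μ : Measure S, [IsProbabilityMeasure μ] → |∫ x, f x ∂μ| ≤ a := fun μ _ => by
    simpa using norm_integral_le_of_norm_le_const (μ := μ)
      (ae_of_all _ fun x => (Real.norm_eq_abs _).trans_le (hfa x))
  linarith [abs_sub (∫ x, f x ∂μ₁) (∫ x, f x ∂μ₂), hint μ₁, hint μ₂]

theorem abs_integral_sub_integral_le_mul_fortetMourier {h : S → ℝ} {A L : ℝ} (hA : 0 ≤ A)
    (hL : 0 ≤ L) (hbound : ∀ x, |h x| ≤ A) (hlip : LipschitzWith (Real.toNNReal L) h) :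
    |(∫ x, h x ∂μ₁) - ∫ x, h x ∂μ₂| ≤ (A + L) * fortetMourier μ₁ μ₂ := by
  rcases (add_nonneg hA hL).eq_or_lt with hAL | hAL
  · have hzero : h = 0 := funext fun x => abs_nonpos_iff.mp ((hbound x).trans_eq (by linarith))
    simp [hzero, ← hAL]
  set c := (A + L)⁻¹
  have hc : 0 < c := inv_pos.mpr hAL
  have hscaled := abs_integral_sub_integral_le_fortetMourier (μ₁ := μ₁) (μ₂ := μ₂)
    (h := fun x => c * h x) (A := c * A) (L := c * L) (by positivity) (by positivity)
    (by rw [← mul_add, inv_mul_cancel₀ hAL.ne']) (fun x => by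
      rw [abs_mul, abs_of_pos hc]; exact mul_le_mul_of_nonneg_left (hbound x) hc.le)
    (by
      rw [Real.toNNReal_mul hc.le, Real.toNNReal_eq_nnnorm_of_nonneg hc.le]
      exact (lipschitzWith_smul c).comp hlip)
  rw [integral_const_mul, integral_const_mul, ← mul_sub, abs_mul, abs_of_pos hc] at hscaled
  rwa [← le_div_iff₀' hc, div_eq_mul_inv, inv_inv, mul_comm] at hscaled

theorem integral_sub_integral_le_mul_fortetMourier_of_mem_Icc {g : S → ℝ} {K : ℝ} (hK : 0 ≤ K)
    (hg : ∀ x, g x ∈ Set.Icc 0 1) (hlip : LipschitzWith (Real.toNNReal K) g)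
    (hint₁ : Integrable g μ₁) (hint₂ : Integrable g μ₂) :
    (∫ x, g x ∂μ₁) - ∫ x, g x ∂μ₂ ≤ (1 / 2 + K) * fortetMourier μ₁ μ₂ := by
  have hcentred := abs_integral_sub_integral_le_mul_fortetMourier (μ₁ := μ₁) (μ₂ := μ₂)
    (h := fun x => g x - 1 / 2) (A := 1 / 2) (by norm_num) hK
    (fun x => abs_sub_le_iff.mpr ⟨by linarith [(hg x).2], by linarith [(hg x).1]⟩)
    (by simpa using hlip.sub (LipschitzWith.const (1 / 2 : ℝ)))
  rw [integral_sub hint₁ (integrable_const _), integral_sub hint₂ (integrable_const _)]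
    at hcentred
  simp only [integral_const, probReal_univ, one_smul, sub_sub_sub_cancel_right] at hcentred
  exact (le_abs_self _).trans hcentred

theorem measure_le_measure_thickening_add_of_fortetMourier_le [OpensMeasurableSpace S] {ε : ℝ}
    (hε : 0 < ε) (hFM : fortetMourier μ₁ μ₂ ≤ 2 / 3 * ε ^ 2) {B : Set S} (hB : MeasurableSet B) :
    μ₁ B ≤ μ₂ (Metric.thickening ε B) + ENNReal.ofReal ε := by
  rcases le_or_gt 1 ε with hε1 | hε1
  · exact (prob_le_one.trans (ENNReal.one_le_ofReal.mpr hε1)).trans le_add_self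
  have hlip : LipschitzWith (Real.toNNReal ε⁻¹) fun x => (thickenedIndicator hε B x : ℝ) := by
    rw [Real.toNNReal_inv, ← one_mul ε.toNNReal⁻¹]
    exact NNReal.isometry_coe.lipschitz.comp (lipschitzWith_thickenedIndicator hε B)
  have hdiff := integral_sub_integral_le_mul_fortetMourier_of_mem_Icc (μ₁ := μ₁) (μ₂ := μ₂)
    (inv_nonneg.mpr hε.le) (fun x => ⟨NNReal.coe_nonneg _, thickenedIndicator_le_one hε B x⟩)
    hlip (BoundedContinuousFunction.integrable_of_nnreal μ₁ _)
    (BoundedContinuousFunction.integrable_of_nnreal μ₂ _)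
  have hFM' : (1 / 2 + ε⁻¹) * fortetMourier μ₁ μ₂ ≤ ε :=
    calc (1 / 2 + ε⁻¹) * fortetMourier μ₁ μ₂ ≤ (1 / 2 + ε⁻¹) * (2 / 3 * ε ^ 2) := by gcongr
      _ = ε * (ε + 2) / 3 := by field_simp
      _ ≤ ε := by nlinarith
  have hreal : μ₁.real B ≤ μ₂.real (Metric.thickening ε B) + ε := by
    linarith [measureReal_le_integral_thickenedIndicator μ₁ hε hB,
      integral_thickenedIndicator_le_measureReal_thickening μ₂ (B := B) hε]
  calc μ₁ B = ENNReal.ofReal (μ₁.real B) := (ofReal_measureReal).symm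
    _ ≤ ENNReal.ofReal (μ₂.real (Metric.thickening ε B) + ε) := ENNReal.ofReal_le_ofReal hreal
    _ = μ₂ (Metric.thickening ε B) + ENNReal.ofReal ε := by
      rw [ENNReal.ofReal_add measureReal_nonneg hε.le, ofReal_measureReal]

end FortetMourier

theorem stmt_5_general {S : Type*} [MetricSpace S]
    [MeasurableSpace S] [BorelSpace S]
    (μ₁ μ₂ : Measure S) [IsProbabilityMeasure μ₁] [IsProbabilityMeasure μ₂] :
    prokhorovOf dist μ₁ μ₂ ≤ Real.sqrt ((3 / 2) * fortetMourier μ₁ μ₂) := by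
  refine prokhorovOf_le_of_forall_lt (Real.sqrt_nonneg _) fun ε hε B hB => ?_
  have hε0 : 0 < ε := (Real.sqrt_nonneg _).trans_lt hε
  have hFM : fortetMourier μ₁ μ₂ ≤ 2 / 3 * ε ^ 2 := by
    linarith [(Real.sqrt_lt' hε0).mp hε]
  have hthick : {x | ∃ y ∈ B, dist x y < ε} = Metric.thickening ε B :=
    Set.ext fun _ => Metric.mem_thickening_iff.symm
  rw [hthick]
  exact measure_le_measure_thickening_add_of_fortetMourier_le hε0 hFM hB

/-- On a separable metric space, the Prokhorov distance is bounded by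
`((3/2)·(Fortet–Mourier distance))^{1/2}`. -/
theorem stmt_5 {S : Type*} [MetricSpace S] [TopologicalSpace.SeparableSpace S]
    [MeasurableSpace S] [BorelSpace S]
    (μ₁ μ₂ : Measure S) [IsProbabilityMeasure μ₁] [IsProbabilityMeasure μ₂] :
    prokhorovOf dist μ₁ μ₂ ≤ Real.sqrt ((3 / 2) * fortetMourier μ₁ μ₂) :=
  stmt_5_general μ₁ μ₂
end

section
/- Let μ₁, μ₂ be Borel probability measures on ℝ with finite first moments and distribution functions F₁, F₂. Then the Wasserstein distance of order 1 between μ₁ and μ₂ equals ∫_ℝ |F₁(x) − F₂(x)| dx. -/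
open MeasureTheory
open scoped ENNReal NNReal

/-- The Wasserstein (Gini–Monge–Wasserstein) distance of order 1, as an `ℝ≥0∞`-valued
infimum of transport costs over couplings. -/
noncomputable def wasserstein1 {X : Type*} [MeasurableSpace X] (d : X → X → ℝ≥0∞)
    (μ ν : Measure X) : ℝ≥0∞ :=
  sInf {c : ℝ≥0∞ | ∃ γ : Measure (X × X),
    γ.map Prod.fst = μ ∧ γ.map Prod.snd = ν ∧ c = ∫⁻ z, d z.1 z.2 ∂γ}

/-!
For a coupling `γ` of `μ₁` and `μ₂`, Tonelli gives `∫ |x - y| dγ = ∫ γ ({x ≤ t} ∆ {y ≤ t}) dt`,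
and `γ (A ∆ B) ≥ |γ A - γ B| = |F₁ t - F₂ t|`, with equality when `A` and `B` are nested up to
null sets. The quantile coupling `u ↦ (F₁⁻¹ u, F₂⁻¹ u)` of Lebesgue measure on `(0, 1)` has nested
sets, because `{u | Fᵢ⁻¹ u ≤ t} = (0, 1) ∩ Iic (Fᵢ t)`.
-/

open ProbabilityTheory Set Filter
open scoped Topology symmDiff

lemma volume_Ici_symmDiff_Ici (a b : ℝ) : volume (Ici a ∆ Ici b) = edist a b := by
  wlog hab : a ≤ b generalizing a b
  · rw [symmDiff_comm, edist_comm]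
    exact this b a (le_of_not_ge hab)
  rw [symmDiff_of_ge (Ici_subset_Ici.2 hab), Ici_sdiff_Ici, Real.volume_Ico, edist_comm,
    edist_dist, Real.dist_eq, abs_of_nonneg (sub_nonneg.2 hab)]

-- Both sides are the `ν.prod volume`-measure of the region between the graphs of `f` and `g`.
lemma lintegral_edist_eq_lintegral_measure_symmDiff {α : Type*} [MeasurableSpace α]
    (ν : Measure α) [SFinite ν] {f g : α → ℝ} (hf : Measurable f) (hg : Measurable g) :
    ∫⁻ a, edist (f a) (g a) ∂ν = ∫⁻ x, ν ({a | f a ≤ x} ∆ {a | g a ≤ x}) := by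
  let S : Set (α × ℝ) := {p | f p.1 ≤ p.2} ∆ {p | g p.1 ≤ p.2}
  have hS : MeasurableSet S :=
    (measurableSet_le (hf.comp measurable_fst) measurable_snd).symmDiff
      (measurableSet_le (hg.comp measurable_fst) measurable_snd)
  calc ∫⁻ a, edist (f a) (g a) ∂ν = ∫⁻ a, volume (Prod.mk a ⁻¹' S) ∂ν := by
        simp_rw [← volume_Ici_symmDiff_Ici]; rfl
    _ = ν.prod volume S := (Measure.prod_apply hS).symm
    _ = ∫⁻ x, ν ({a | f a ≤ x} ∆ {a | g a ≤ x}) := Measure.prod_apply_symm hS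

section SymmDiff

variable {α : Type*} [MeasurableSpace α] {μ : Measure α} [IsFiniteMeasure μ] {s t : Set α}

lemma ofReal_abs_measureReal_sub_le_measure_symmDiff (hs : NullMeasurableSet s μ)
    (ht : NullMeasurableSet t μ) : ENNReal.ofReal |μ.real s - μ.real t| ≤ μ (s ∆ t) := by
  rw [← ofReal_measureReal]
  exact ENNReal.ofReal_le_ofReal (abs_measureReal_sub_le_measureReal_symmDiff hs ht)

lemma measure_symmDiff_eq_ofReal_abs_sub_of_ae_le (hs : NullMeasurableSet s μ)
    (ht : NullMeasurableSet t μ) (hst : s ≤ᵐ[μ] t) :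
    μ (s ∆ t) = ENNReal.ofReal |μ.real s - μ.real t| := by
  have hts : μ (t ∪ s) = μ t :=
    measure_congr (union_comm t s ▸ union_ae_eq_right.2 (ae_le_set.1 hst))
  have hle : μ.real s ≤ μ.real t :=
    ENNReal.toReal_mono (measure_ne_top μ t) (measure_mono_ae hst)
  calc μ (s ∆ t) = μ (t \ s) := by rw [measure_symmDiff_eq hs ht, ae_le_set.1 hst, zero_add]
    _ = μ t - μ s := by rw [measure_sdiff' t hs (measure_ne_top μ s), hts]
    _ = ENNReal.ofReal (μ.real t - μ.real s) := by
      rw [ENNReal.ofReal_sub _ measureReal_nonneg, ofReal_measureReal, ofReal_measureReal]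
    _ = ENNReal.ofReal |μ.real s - μ.real t| := by
      rw [abs_sub_comm, abs_of_nonneg (sub_nonneg.2 hle)]

end SymmDiff

lemma cdf_map {α : Type*} [MeasurableSpace α] {ν : Measure α} [IsProbabilityMeasure ν]
    {f : α → ℝ} (hf : AEMeasurable f ν) (x : ℝ) : cdf (ν.map f) x = ν.real {a | f a ≤ x} := by
  have := Measure.isProbabilityMeasure_map hf
  rw [cdf_eq_real, measureReal_def, measureReal_def,
    Measure.map_apply_of_aemeasurable hf measurableSet_Iic]
  rfl

lemma ae_le_set_map_iff {α β : Type*} [MeasurableSpace α] [MeasurableSpace β] {ν : Measure α}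
    {f : α → β} (hf : AEMeasurable f ν) {s t : Set β} (hs : MeasurableSet s)
    (ht : MeasurableSet t) : s ≤ᵐ[ν.map f] t ↔ f ⁻¹' s ≤ᵐ[ν] f ⁻¹' t := by
  rw [ae_le_set, ae_le_set, Measure.map_apply_of_aemeasurable hf (hs.diff ht), preimage_sdiff]

section Comonotone

variable (γ : Measure (ℝ × ℝ)) [IsProbabilityMeasure γ]

lemma ofReal_abs_cdf_map_sub_le_measure_symmDiff (x : ℝ) :
    ENNReal.ofReal |cdf (γ.map Prod.fst) x - cdf (γ.map Prod.snd) x|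
      ≤ γ ({z | z.1 ≤ x} ∆ {z | z.2 ≤ x}) := by
  rw [cdf_map measurable_fst.aemeasurable, cdf_map measurable_snd.aemeasurable]
  exact ofReal_abs_measureReal_sub_le_measure_symmDiff
    (measurableSet_le measurable_fst measurable_const).nullMeasurableSet
    (measurableSet_le measurable_snd measurable_const).nullMeasurableSet

lemma lintegral_abs_cdf_map_sub_le_lintegral_edist :
    ∫⁻ x, ENNReal.ofReal |cdf (γ.map Prod.fst) x - cdf (γ.map Prod.snd) x|
      ≤ ∫⁻ z, edist z.1 z.2 ∂γ := by
  rw [lintegral_edist_eq_lintegral_measure_symmDiff γ measurable_fst measurable_snd]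
  exact lintegral_mono (ofReal_abs_cdf_map_sub_le_measure_symmDiff γ)

lemma lintegral_edist_eq_lintegral_abs_cdf_map_sub
    (hγ : ∀ x, {z : ℝ × ℝ | z.1 ≤ x} ≤ᵐ[γ] {z | z.2 ≤ x}
      ∨ {z : ℝ × ℝ | z.2 ≤ x} ≤ᵐ[γ] {z | z.1 ≤ x}) :
    ∫⁻ z, edist z.1 z.2 ∂γ
      = ∫⁻ x, ENNReal.ofReal |cdf (γ.map Prod.fst) x - cdf (γ.map Prod.snd) x| := by
  rw [lintegral_edist_eq_lintegral_measure_symmDiff γ measurable_fst measurable_snd]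
  refine lintegral_congr fun x => ?_
  have h₁ : NullMeasurableSet {z : ℝ × ℝ | z.1 ≤ x} γ :=
    (measurableSet_le measurable_fst measurable_const).nullMeasurableSet
  have h₂ : NullMeasurableSet {z : ℝ × ℝ | z.2 ≤ x} γ :=
    (measurableSet_le measurable_snd measurable_const).nullMeasurableSet
  rw [cdf_map measurable_fst.aemeasurable, cdf_map measurable_snd.aemeasurable]
  rcases hγ x with h | h
  · exact measure_symmDiff_eq_ofReal_abs_sub_of_ae_le h₁ h₂ h
  · rw [symmDiff_comm, abs_sub_comm]
    exact measure_symmDiff_eq_ofReal_abs_sub_of_ae_le h₂ h₁ h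

end Comonotone

namespace ProbabilityTheory

-- Meaningful only for `u ∈ (0, 1)`: otherwise the set is empty or unbounded below and `sInf`
-- returns `0`.
noncomputable def quantile (μ : Measure ℝ) (u : ℝ) : ℝ := sInf {x | u ≤ cdf μ x}

variable (μ : Measure ℝ)

lemma le_cdf_quantile {u : ℝ} (hu : u < 1) : u ≤ cdf μ (quantile μ u) := by
  obtain ⟨y₀, hy₀⟩ := ((tendsto_cdf_atTop μ).eventually (eventually_ge_nhds hu)).exists
  refine ge_of_tendsto (((cdf μ).right_continuous _).mono Ioi_subset_Ici_self) ?_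
  filter_upwards [self_mem_nhdsWithin] with y hy
  obtain ⟨s, hs, hsy⟩ := exists_lt_of_csInf_lt ⟨y₀, hy₀⟩ hy
  exact hs.trans (monotone_cdf μ hsy.le)

lemma bddBelow_setOf_le_cdf {u : ℝ} (hu : 0 < u) : BddBelow {x | u ≤ cdf μ x} := by
  obtain ⟨z, hz⟩ := eventually_atBot.mp
    ((tendsto_cdf_atBot μ).eventually (eventually_lt_nhds hu))
  exact ⟨z, fun s hs => le_of_not_ge fun hsz => (hz s hsz).not_ge hs⟩

lemma quantile_le_iff {u : ℝ} (hu : u ∈ Ioo 0 1) (x : ℝ) : quantile μ u ≤ x ↔ u ≤ cdf μ x :=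
  ⟨fun h => (le_cdf_quantile μ hu.2).trans (monotone_cdf μ h),
    fun h => csInf_le (bddBelow_setOf_le_cdf μ hu.1) h⟩

lemma monotoneOn_quantile : MonotoneOn (quantile μ) (Ioo 0 1) := fun _ hu _ hv huv =>
  (quantile_le_iff μ hu _).2 (huv.trans ((quantile_le_iff μ hv _).1 le_rfl))

lemma aemeasurable_quantile : AEMeasurable (quantile μ) (volume.restrict (Ioo 0 1)) :=
  aemeasurable_restrict_of_monotoneOn measurableSet_Ioo (monotoneOn_quantile μ)

instance : IsProbabilityMeasure (volume.restrict (Ioo (0 : ℝ) 1)) :=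
  ⟨by simp [Real.volume_Ioo]⟩

lemma volume_restrict_Ioo_Iic {c : ℝ} (hc : c ≤ 1) :
    volume.restrict (Ioo (0 : ℝ) 1) (Iic c) = ENNReal.ofReal c := by
  rw [Measure.restrict_congr_set Ioo_ae_eq_Ioc, Measure.restrict_apply measurableSet_Iic,
    Iic_inter_Ioc_of_le hc, Real.volume_Ioc, sub_zero]

lemma quantile_preimage_Iic_ae_eq (x : ℝ) :
    quantile μ ⁻¹' Iic x =ᵐ[volume.restrict (Ioo 0 1)] Iic (cdf μ x) := by
  filter_upwards [ae_restrict_mem measurableSet_Ioo] with u hu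
  exact propext (quantile_le_iff μ hu x)

lemma map_quantile [IsProbabilityMeasure μ] :
    (volume.restrict (Ioo (0 : ℝ) 1)).map (quantile μ) = μ := by
  have := Measure.isProbabilityMeasure_map (aemeasurable_quantile μ)
  refine Measure.ext_of_Iic _ _ fun x => ?_
  rw [Measure.map_apply_of_aemeasurable (aemeasurable_quantile μ) measurableSet_Iic,
    measure_congr (quantile_preimage_Iic_ae_eq μ x), volume_restrict_Ioo_Iic (cdf_le_one μ x),
    ofReal_cdf]

noncomputable def quantileCoupling (μ ν : Measure ℝ) : Measure (ℝ × ℝ) :=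
  (volume.restrict (Ioo (0 : ℝ) 1)).map fun u => (quantile μ u, quantile ν u)

variable (ν : Measure ℝ)

lemma aemeasurable_quantile_prod :
    AEMeasurable (fun u => (quantile μ u, quantile ν u)) (volume.restrict (Ioo (0 : ℝ) 1)) :=
  (aemeasurable_quantile μ).prodMk (aemeasurable_quantile ν)

instance : IsProbabilityMeasure (quantileCoupling μ ν) :=
  Measure.isProbabilityMeasure_map (aemeasurable_quantile_prod μ ν)

lemma map_fst_quantileCoupling [IsProbabilityMeasure μ] :
    (quantileCoupling μ ν).map Prod.fst = μ := by
  rw [quantileCoupling, AEMeasurable.map_map_of_aemeasurable measurable_fst.aemeasurable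
    (aemeasurable_quantile_prod μ ν)]
  exact map_quantile μ

lemma map_snd_quantileCoupling [IsProbabilityMeasure ν] :
    (quantileCoupling μ ν).map Prod.snd = ν := by
  rw [quantileCoupling, AEMeasurable.map_map_of_aemeasurable measurable_snd.aemeasurable
    (aemeasurable_quantile_prod μ ν)]
  exact map_quantile ν

lemma quantileCoupling_comonotone (x : ℝ) :
    {z : ℝ × ℝ | z.1 ≤ x} ≤ᵐ[quantileCoupling μ ν] {z | z.2 ≤ x}
      ∨ {z : ℝ × ℝ | z.2 ≤ x} ≤ᵐ[quantileCoupling μ ν] {z | z.1 ≤ x} := by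
  have h₁ : MeasurableSet {z : ℝ × ℝ | z.1 ≤ x} :=
    measurableSet_le measurable_fst measurable_const
  have h₂ : MeasurableSet {z : ℝ × ℝ | z.2 ≤ x} :=
    measurableSet_le measurable_snd measurable_const
  rw [quantileCoupling, ae_le_set_map_iff (aemeasurable_quantile_prod μ ν) h₁ h₂,
    ae_le_set_map_iff (aemeasurable_quantile_prod μ ν) h₂ h₁]
  rcases le_total (cdf μ x) (cdf ν x) with h | h
  · exact .inl <| (quantile_preimage_Iic_ae_eq μ x).le.trans
      ((Iic_subset_Iic.2 h).eventuallyLE.trans (quantile_preimage_Iic_ae_eq ν x).symm.le)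
  · exact .inr <| (quantile_preimage_Iic_ae_eq ν x).le.trans
      ((Iic_subset_Iic.2 h).eventuallyLE.trans (quantile_preimage_Iic_ae_eq μ x).symm.le)

end ProbabilityTheory

theorem stmt_6_general (μ₁ μ₂ : Measure ℝ) [IsProbabilityMeasure μ₁] [IsProbabilityMeasure μ₂]
    (F₁ F₂ : ℝ → ℝ)
    (hF₁ : ∀ x, F₁ x = (μ₁ (Set.Iic x)).toReal)
    (hF₂ : ∀ x, F₂ x = (μ₂ (Set.Iic x)).toReal) :
    wasserstein1 (fun x y => edist x y) μ₁ μ₂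
      = ∫⁻ x, ENNReal.ofReal |F₁ x - F₂ x| := by
  obtain rfl : F₁ = cdf μ₁ := funext fun x => (hF₁ x).trans (cdf_eq_real μ₁ x).symm
  obtain rfl : F₂ = cdf μ₂ := funext fun x => (hF₂ x).trans (cdf_eq_real μ₂ x).symm
  refine le_antisymm (sInf_le ⟨quantileCoupling μ₁ μ₂, map_fst_quantileCoupling μ₁ μ₂,
    map_snd_quantileCoupling μ₁ μ₂, ?_⟩) (le_sInf ?_)
  · rw [lintegral_edist_eq_lintegral_abs_cdf_map_sub _ (quantileCoupling_comonotone μ₁ μ₂),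
      map_fst_quantileCoupling, map_snd_quantileCoupling]
  · rintro _ ⟨γ, rfl, rfl, rfl⟩
    have := (Measure.isProbabilityMeasure_map_iff measurable_fst.aemeasurable).1 ‹_›
    exact lintegral_abs_cdf_map_sub_le_lintegral_edist γ

/-- For Borel probability measures `μ₁, μ₂` on `ℝ` with finite first moments and
distribution functions `F₁, F₂`, the Wasserstein distance of order 1 equals
`∫ |F₁(x) − F₂(x)| dx` (Dall'Aglio's theorem). -/
theorem stmt_6 (μ₁ μ₂ : Measure ℝ) [IsProbabilityMeasure μ₁] [IsProbabilityMeasure μ₂]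
    (hm₁ : Integrable (fun x => |x|) μ₁) (hm₂ : Integrable (fun x => |x|) μ₂)
    (F₁ F₂ : ℝ → ℝ)
    (hF₁ : ∀ x, F₁ x = (μ₁ (Set.Iic x)).toReal)
    (hF₂ : ∀ x, F₂ x = (μ₂ (Set.Iic x)).toReal) :
    wasserstein1 (fun x y => edist x y) μ₁ μ₂
      = ∫⁻ x, ENNReal.ofReal |F₁ x - F₂ x| :=
  stmt_6_general μ₁ μ₂ F₁ F₂ hF₁ hF₂
end
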